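/- In a directed graph with nonnegative edge weights and unique shortest paths, for any vertices s, t and any failed vertex f on the shortest path from s to t (f ≠ s, t), every shortest s–t path avoiding f diverges from the s–t shortest path at exactly one vertex Δ lying on the segment from s to f, and converges back at exactly one vertex ∇ lying on the segment from f to t, and between Δ and ∇ it is vertex-disjoint from the interior of the s–t shortest path. -/

import Mathlib

open scoped ENNReal

/-- Cost of a walk, given as a list of vertices, in a weighted digraph:
the sum of the weights of consecutive pairs.  Non-edges have weight `⊤`. -/
noncomputable def walkCost {V : Type*} (w : V → V → ℝ≥0∞) : List V → ℝ≥0∞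
  | [] => 0
  | [_] => 0
  | a :: b :: l => w a b + walkCost w (b :: l)

/-- `p` is a walk from `s` to `t`. -/
def IsWalkFromTo {V : Type*} (s t : V) (p : List V) : Prop :=
  p.head? = some s ∧ p.getLast? = some t

/-- `d(s,t ∣ avoid A)`: the length of the shortest walk from `s` to `t`
avoiding every vertex of `A` (`⊤` if none exists). -/
noncomputable def dAvoid {V : Type*} (w : V → V → ℝ≥0∞) (s t : V) (A : Set V) : ℝ≥0∞ :=
  ⨅ p ∈ {p : List V | IsWalkFromTo s t p ∧ ∀ x ∈ p, x ∉ A}, walkCost w p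

/-- All-pairs unique shortest paths. -/
def UniqueSP {V : Type*} (w : V → V → ℝ≥0∞) : Prop :=
  ∀ a b : V, dAvoid w a b ∅ ≠ ⊤ →
    ∃! p : List V, IsWalkFromTo a b p ∧ walkCost w p = dAvoid w a b ∅

/-- The set of vertices of the path `P` with positions in `[iu, iv]`:
the interval `[u, v]` on `P`. -/
def intervalSet {V : Type*} (P : List V) (iu iv : ℕ) : Set V :=
  {x | ∃ i : ℕ, iu ≤ i ∧ i ≤ iv ∧ P[i]? = some x}

/-!
Shortest paths have optimal substructure: splitting a shortest walk avoiding `A` at a vertex `x`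
gives shortest walks avoiding `A` to and from `x`, because `dAvoid` satisfies the triangle
inequality. So if the replacement path `R` meets a vertex `x` of `P` lying before `f`, its prefix
up to `x` is a shortest `s`–`x` walk avoiding `f`; the prefix of `P` up to `x` avoids `f` (by
uniqueness `P` repeats no vertex) and is the unique shortest `s`–`x` path, so the two prefixes
coincide. Symmetrically for vertices after `f`. Hence `Δ` is the last vertex of `R` on `P` before
`f`, `∇` the first one after `f`, and in between `R` meets no vertex of `P` at all.
-/

section
variable {V : Type*} {w : V → V → ℝ≥0∞} {s t x : V} {A : Set V}

theorem walkCost_append_cons (p₁ : List V) (x : V) (p₂ : List V) :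
    walkCost w (p₁ ++ x :: p₂) = walkCost w (p₁ ++ [x]) + walkCost w (x :: p₂) := by
  induction p₁ with
  | nil => simp [walkCost]
  | cons a p₁ ih =>
    cases p₁ with
    | nil => simp [walkCost]
    | cons b p₁ => simp only [List.cons_append, walkCost] at ih ⊢; rw [ih, add_assoc]

theorem isWalkFromTo_append_cons_iff {p₁ p₂ : List V} :
    IsWalkFromTo s t (p₁ ++ x :: p₂) ↔
      IsWalkFromTo s x (p₁ ++ [x]) ∧ IsWalkFromTo x t (x :: p₂) := by
  have hhead : (p₁ ++ x :: p₂).head? = (p₁ ++ [x]).head? := by cases p₁ <;> simp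
  simp [IsWalkFromTo, hhead]

theorem IsWalkFromTo.mem_take {p : List V} (hp : IsWalkFromTo s t p) {k : ℕ}
    (hk : k < p.length) (hks : p[k] ≠ s) : s ∈ p.take k := by
  have hk0 : k ≠ 0 := by
    rintro rfl
    exact hks (by simpa [List.head?_eq_getElem?, hk] using hp.1)
  exact List.mem_of_mem_head? (by rw [List.head?_take, if_neg hk0]; exact hp.1)

theorem IsWalkFromTo.mem_drop {p : List V} (hp : IsWalkFromTo s t p) {k : ℕ}
    (hk : k < p.length) (hkt : p[k] ≠ t) : t ∈ p.drop (k + 1) := by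
  have hklast : ¬p.length ≤ k + 1 := by
    intro hle
    obtain rfl : k = p.length - 1 := by omega
    exact hkt (by simpa [List.getLast?_eq_getElem?, hk] using hp.2)
  exact List.mem_of_mem_getLast? (by rw [List.getLast?_drop, if_neg hklast]; exact hp.2)

theorem dAvoid_le_walkCost {p : List V} (hp : IsWalkFromTo s t p) (hA : ∀ y ∈ p, y ∉ A) :
    dAvoid w s t A ≤ walkCost w p :=
  iInf₂_le p ⟨hp, hA⟩

theorem dAvoid_mono {B : Set V} (h : A ⊆ B) : dAvoid w s t A ≤ dAvoid w s t B :=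
  le_iInf₂ fun _ hp => dAvoid_le_walkCost hp.1 fun y hy hyA => hp.2 y hy (h hyA)

theorem dAvoid_le_add (s x t : V) (A : Set V) :
    dAvoid w s t A ≤ dAvoid w s x A + dAvoid w x t A := by
  simp only [dAvoid, ENNReal.iInf_add, ENNReal.add_iInf]
  refine le_iInf₂ fun q hq => le_iInf₂ fun p hp => ?_
  obtain ⟨p', rfl⟩ := List.getLast?_eq_some_iff.1 hp.1.2
  obtain ⟨q', rfl⟩ := List.head?_eq_some_iff.1 hq.1.1
  rw [← walkCost_append_cons]
  refine dAvoid_le_walkCost (isWalkFromTo_append_cons_iff.2 ⟨hp.1, hq.1⟩) fun y hy => ?_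
  rcases List.mem_append.1 hy with hy | hy
  · exact hp.2 y (List.mem_append_left _ hy)
  · exact hq.2 y hy

structure IsShortestAvoiding (w : V → V → ℝ≥0∞) (s t : V) (A : Set V) (p : List V) :
    Prop where
  isWalk : IsWalkFromTo s t p
  avoids : ∀ y ∈ p, y ∉ A
  cost_eq : walkCost w p = dAvoid w s t A
  cost_ne_top : walkCost w p ≠ ⊤

theorem IsShortestAvoiding.split {p₁ p₂ : List V}
    (hp : IsShortestAvoiding w s t A (p₁ ++ x :: p₂)) :
    IsShortestAvoiding w s x A (p₁ ++ [x]) ∧ IsShortestAvoiding w x t A (x :: p₂) := by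
  obtain ⟨hwalk₁, hwalk₂⟩ := isWalkFromTo_append_cons_iff.1 hp.isWalk
  have havoid₁ : ∀ y ∈ p₁ ++ [x], y ∉ A :=
    fun y hy => hp.avoids y (by simp at hy ⊢; tauto)
  have havoid₂ : ∀ y ∈ x :: p₂, y ∉ A :=
    fun y hy => hp.avoids y (by simp at hy ⊢; tauto)
  have hle₁ := dAvoid_le_walkCost (w := w) hwalk₁ havoid₁
  have hle₂ := dAvoid_le_walkCost (w := w) hwalk₂ havoid₂
  have hsplit := walkCost_append_cons (w := w) p₁ x p₂
  obtain ⟨hfin₁, hfin₂⟩ := ENNReal.add_ne_top.1 (hsplit ▸ hp.cost_ne_top)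
  have hsum :
      walkCost w (p₁ ++ [x]) + walkCost w (x :: p₂) ≤ dAvoid w s x A + dAvoid w x t A :=
    hsplit ▸ hp.cost_eq ▸ dAvoid_le_add s x t A
  have h₁ := ENNReal.le_of_add_le_add_right hfin₂ (hsum.trans (by gcongr))
  have h₂ := ENNReal.le_of_add_le_add_left hfin₁ (hsum.trans (by gcongr))
  exact ⟨⟨hwalk₁, havoid₁, le_antisymm h₁ hle₁, hfin₁⟩,
    ⟨hwalk₂, havoid₂, le_antisymm h₂ hle₂, hfin₂⟩⟩

theorem UniqueSP.eq_of_isShortestAvoiding (husp : UniqueSP w) {p q : List V}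
    (hp : IsShortestAvoiding w s t A p) (hq : IsShortestAvoiding w s t ∅ q)
    (hqA : ∀ y ∈ q, y ∉ A) : p = q := by
  have hd : dAvoid w s t A = dAvoid w s t ∅ :=
    le_antisymm (hq.cost_eq ▸ dAvoid_le_walkCost hq.isWalk hqA)
      (dAvoid_mono (Set.empty_subset A))
  exact (husp s t (hq.cost_eq ▸ hq.cost_ne_top)).unique ⟨hp.isWalk, hp.cost_eq.trans hd⟩
    ⟨hq.isWalk, hq.cost_eq⟩

theorem IsShortestAvoiding.nodup (husp : UniqueSP w) {p : List V}
    (hp : IsShortestAvoiding w s t ∅ p) : p.Nodup := by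
  refine List.nodup_iff_sublist.2 fun x hx => ?_
  obtain ⟨r₁, r₂, rfl, hx₁, hx₂⟩ := List.cons_sublist_iff.1 hx
  obtain ⟨p₁, p₂, rfl⟩ := List.append_of_mem hx₁
  obtain ⟨q₁, q₂, rfl⟩ := List.append_of_mem (List.singleton_sublist.1 hx₂)
  have h₁ : IsShortestAvoiding w s t ∅ (p₁ ++ x :: (p₂ ++ q₁ ++ x :: q₂)) := by
    simpa using hp
  have h₂ : IsShortestAvoiding w s t ∅ ((p₁ ++ x :: p₂ ++ q₁) ++ x :: q₂) := by
    simpa using hp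
  have heq := husp.eq_of_isShortestAvoiding h₁.split.2 h₂.split.2 (by simp)
  have hlen := congrArg List.length heq
  simp at hlen
  omega

theorem UniqueSP.take_succ_prefix_of_getElem_mem_take (husp : UniqueSP w) {P R : List V}
    {k j : ℕ}
    (hP : IsShortestAvoiding w s t ∅ P) (hR : IsShortestAvoiding w s t A R)
    (hPA : ∀ y ∈ P.take k, y ∉ A) (hj : j < R.length) (hjP : R[j] ∈ P.take k) :
    R.take (j + 1) <+: P.take k := by
  obtain ⟨P₁, P₂, hPk⟩ := List.append_of_mem hjP
  have hP' : IsShortestAvoiding w s t ∅ (P₁ ++ R[j] :: (P₂ ++ P.drop k)) := by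
    rwa [← List.cons_append, ← List.append_assoc, ← hPk, List.take_append_drop]
  have hR' : IsShortestAvoiding w s t A (R.take j ++ R[j] :: R.drop (j + 1)) := by
    rwa [List.getElem_cons_drop, List.take_append_drop]
  have hP₁A : ∀ y ∈ P₁ ++ [R[j]], y ∉ A :=
    fun y hy => hPA y (by rw [hPk]; simp at hy ⊢; tauto)
  have h := husp.eq_of_isShortestAvoiding hR'.split.1 hP'.split.1 hP₁A
  rw [← List.take_append_getElem hj, h, hPk]
  exact ⟨P₂, by simp⟩

theorem UniqueSP.drop_suffix_of_getElem_mem_drop (husp : UniqueSP w) {P R : List V}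
    {k j : ℕ}
    (hP : IsShortestAvoiding w s t ∅ P) (hR : IsShortestAvoiding w s t A R)
    (hPA : ∀ y ∈ P.drop k, y ∉ A) (hj : j < R.length) (hjP : R[j] ∈ P.drop k) :
    R.drop j <:+ P.drop k := by
  obtain ⟨P₁, P₂, hPk⟩ := List.append_of_mem hjP
  have hP' : IsShortestAvoiding w s t ∅ ((P.take k ++ P₁) ++ R[j] :: P₂) := by
    rwa [List.append_assoc, ← hPk, List.take_append_drop]
  have hR' : IsShortestAvoiding w s t A (R.take j ++ R[j] :: R.drop (j + 1)) := by
    rwa [List.getElem_cons_drop, List.take_append_drop]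
  have hP₂A : ∀ y ∈ R[j] :: P₂, y ∉ A :=
    fun y hy => hPA y (by rw [hPk]; simp at hy ⊢; tauto)
  have h := husp.eq_of_isShortestAvoiding hR'.split.2 hP'.split.2 hP₂A
  rw [← List.getElem_cons_drop hj, h, hPk]
  exact ⟨P₁, rfl⟩

theorem List.eq_take_append_getElem_append_getElem_append_drop {α : Type*} {l : List α}
    {i j : ℕ} (hij : i < j) (hj : j < l.length) :
    l = l.take i ++ [l[i]] ++ (l.take j).drop (i + 1) ++ [l[j]] ++ l.drop (j + 1) := by
  have htake : l.take j = l.take (i + 1) ++ (l.take j).drop (i + 1) := by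
    conv_lhs => rw [← List.take_append_drop (i + 1) (l.take j)]
    rw [List.take_take, Nat.min_eq_left hij]
  conv_lhs => rw [← List.take_append_drop j l, ← List.getElem_cons_drop hj, htake,
    ← List.take_append_getElem (hij.trans hj)]
  simp

theorem exists_divergence_convergence_split {L U R : List V}
    (hR : IsWalkFromTo s t R) (hs : s ∈ L) (ht : t ∈ U) (hLU : L.Disjoint U)
    (hpre : ∀ j (hj : j < R.length), R[j] ∈ L → R.take (j + 1) <+: L)
    (hsuf : ∀ j (hj : j < R.length), R[j] ∈ U → R.drop j <:+ U) :
    ∃ (A M B : List V) (Δ nab : V), R = A ++ [Δ] ++ M ++ [nab] ++ B ∧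
      (A ++ [Δ]) <+: L ∧ ([nab] ++ B) <:+ U ∧ ∀ x ∈ M, x ∉ L ∧ x ∉ U := by
  classical
  let InL (j : ℕ) : Prop := ∃ hj : j < R.length, R[j] ∈ L
  let InU (j : ℕ) : Prop := ∃ hj : j < R.length, R[j] ∈ U
  have hfirst : InL 0 := by
    obtain ⟨h, hR0⟩ := List.getElem?_eq_some_iff.1 (List.head?_eq_getElem? ▸ hR.1)
    exact ⟨h, hR0 ▸ hs⟩
  have hlast : ∃ j, InU j := by
    obtain ⟨h, hRt⟩ := List.getElem?_eq_some_iff.1 (List.getLast?_eq_getElem? ▸ hR.2)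
    exact ⟨_, h, hRt ▸ ht⟩
  obtain ⟨ha, haL⟩ : InL (Nat.findGreatest InL R.length) :=
    Nat.findGreatest_spec (Nat.zero_le _) hfirst
  obtain ⟨hb, hbU⟩ : InU (Nat.find hlast) := Nat.find_spec hlast
  set a := Nat.findGreatest InL R.length
  set b := Nat.find hlast
  have hab : a < b := by
    by_contra! hba
    exact hLU ((hpre a ha haL).subset (List.mem_take_iff_getElem.2 ⟨b, by omega, rfl⟩)) hbU
  refine ⟨R.take a, (R.take b).drop (a + 1), R.drop (b + 1), R[a], R[b],
    List.eq_take_append_getElem_append_getElem_append_drop hab hb, ?_, ?_, fun x hx => ?_⟩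
  · rw [List.take_append_getElem]
    exact hpre a ha haL
  · rw [List.singleton_append, List.getElem_cons_drop]
    exact hsuf b hb hbU
  · obtain ⟨i, hi, rfl⟩ := List.mem_drop_iff_getElem.1 hx
    simp only [List.length_take, List.getElem_take] at hi ⊢
    have hiR : a + 1 + i < R.length := by omega
    refine ⟨fun hL => ?_, fun hU => ?_⟩
    · have := Nat.le_findGreatest (P := InL) hiR.le ⟨hiR, hL⟩
      omega
    · have := Nat.find_min' hlast ⟨hiR, hU⟩
      omega

end

/-- **Unique divergence and convergence of replacement paths.**
In a directed graph with nonnegative weights and unique shortest paths, for a failed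
vertex `f` on the unique shortest `s`–`t` path `P` (with `f ≠ s, t`), every shortest
`s`–`t` path `R` avoiding `f` decomposes as `A ++ [Δ] ++ M ++ [∇] ++ B`, where
`A ++ [Δ]` is a prefix of `P` (so `R` diverges from `P` at the single vertex `Δ`,
which lies on the segment of `P` strictly before `f`), `[∇] ++ B` is a suffix of `P`
(so `R` converges back at the single vertex `∇`, lying strictly after `f`), and the
middle part `M` is vertex-disjoint from the interior of `P`. -/
theorem replacement_path_diverges_converges_once {V : Type*} (w : V → V → ℝ≥0∞)
    (husp : UniqueSP w)
    (s t f : V) (P : List V)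
    (hP : IsWalkFromTo s t P) (hPcost : walkCost w P = dAvoid w s t ∅)
    (k : ℕ) (hf : P[k]? = some f) (hfs : f ≠ s) (hft : f ≠ t)
    (hfin : dAvoid w s t {f} ≠ ⊤)
    (R : List V) (hR : IsWalkFromTo s t R) (hfR : f ∉ R)
    (hRcost : walkCost w R = dAvoid w s t {f}) :
    ∃ (A M B : List V) (Δ nab : V) (iΔ inab : ℕ),
      R = A ++ [Δ] ++ M ++ [nab] ++ B ∧
      (A ++ [Δ]) <+: P ∧
      ([nab] ++ B) <:+ P ∧
      P[iΔ]? = some Δ ∧ iΔ < k ∧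
      P[inab]? = some nab ∧ k < inab ∧
      (∀ x ∈ M, x ∈ P → x = s ∨ x = t) := by
  have hPs : IsShortestAvoiding w s t ∅ P :=
    ⟨hP, by simp, hPcost, hPcost ▸ ne_top_of_le_ne_top hfin (dAvoid_mono (by simp))⟩
  have hRs : IsShortestAvoiding w s t {f} R :=
    ⟨hR, fun _ hy hyf => hfR (hyf ▸ hy), hRcost, hRcost ▸ hfin⟩
  obtain ⟨hk, rfl⟩ := List.getElem?_eq_some_iff.1 hf
  have hnodup := hPs.nodup husp
  have hfL : P[k] ∉ P.take k := fun h =>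
    List.disjoint_take_drop hnodup le_rfl h (List.mem_drop_iff_getElem.2 ⟨0, by omega, rfl⟩)
  have hfU : P[k] ∉ P.drop (k + 1) := fun h =>
    List.disjoint_take_drop hnodup le_rfl (List.mem_take_iff_getElem.2 ⟨k, by omega, rfl⟩) h
  obtain ⟨A, M, B, Δ, nab, hRsplit, hpre, hsuf, hM⟩ := exists_divergence_convergence_split hR
    (hP.mem_take hk hfs) (hP.mem_drop hk hft) (List.disjoint_take_drop hnodup k.le_succ)
    (fun _ => husp.take_succ_prefix_of_getElem_mem_take hPs hRs fun _ hy hyf => hfL (hyf ▸ hy))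
    (fun _ => husp.drop_suffix_of_getElem_mem_drop hPs hRs fun _ hy hyf => hfU (hyf ▸ hy))
  have hΔ : Δ ∈ P.take k := hpre.subset (by simp)
  have hnab : nab ∈ P.drop (k + 1) := hsuf.subset (by simp)
  obtain ⟨iΔ, hiΔ, hPΔ⟩ := List.mem_take_iff_getElem.1 hΔ
  obtain ⟨i, hi, hPnab⟩ := List.mem_drop_iff_getElem.1 hnab
  refine ⟨A, M, B, Δ, nab, iΔ, k + 1 + i, hRsplit, hpre.trans (List.take_prefix k P),
    hsuf.trans (List.drop_suffix _ P), List.getElem?_eq_some_iff.2 ⟨_, hPΔ⟩, by omega,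
    List.getElem?_eq_some_iff.2 ⟨_, hPnab⟩, by omega, fun x hxM hxP => ?_⟩
  have hPk : P = P.take k ++ P[k] :: P.drop (k + 1) := by
    rw [List.getElem_cons_drop, List.take_append_drop]
  rw [hPk, List.mem_append, List.mem_cons] at hxP
  rcases hxP with hxL | rfl | hxU
  · exact absurd hxL (hM x hxM).1
  · exact absurd (by simp [hRsplit, hxM]) hfR
  · exact absurd hxU (hM x hxM).2
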